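/- arXiv:math/0405055 — 4 statements merged into one kernel-verified Lean document; each statement's English description precedes it below -/
import Mathlib

section
/- For every ε > 0 and every N ≥ 1 there exists a finite partition α of X into intervals such that var_A(g_N) < ‖g_N‖_∞ + ε for every A ∈ α. -/
open MeasureTheory Set

/-- The transfer operator `Pf(x) = ∑_{y ∈ X, T y = x} g(y) f(y)` on `X = [0,1]`. -/
noncomputable def transferOp (T g : ℝ → ℝ) (f : ℝ → ℝ) : ℝ → ℝ := fun x =>
  ∑' y : {y : ℝ // y ∈ Icc (0:ℝ) 1 ∧ T y = x}, g y.1 * f y.1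

/-- `g_N = (g ∘ T^{N-1}) ⋯ (g ∘ T) · g`; since `g` vanishes on `S`, this agrees with
the definition `g_N = 0` on `S_N`. -/
noncomputable def gIter (T g : ℝ → ℝ) (N : ℕ) : ℝ → ℝ := fun x =>
  ∏ k ∈ Finset.range N, g (T^[k] x)

/-- Supremum norm over `X = [0,1]`. -/
noncomputable def supNorm01 (f : ℝ → ℝ) : ℝ := sSup (f '' Icc 0 1)

/-- The set `S_N = ⋃_{k=0}^{N-1} T^{-k} S` (inside `X = [0,1]`). -/
def SIter (S : Set ℝ) (T : ℝ → ℝ) (N : ℕ) : Set ℝ :=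
  Icc 0 1 ∩ ⋃ k ∈ Finset.range N, T^[k] ⁻¹' S

/-- `U_N = X ∖ S_N`. -/
def UIter (S : Set ℝ) (T : ℝ → ℝ) (N : ℕ) : Set ℝ := Icc 0 1 \ SIter S T N

/-- `β_N`: the family of closures of the connected components of `U_N`. -/
def betaFam (S : Set ℝ) (T : ℝ → ℝ) (N : ℕ) : Set (Set ℝ) :=
  (fun x => closure (connectedComponentIn (UIter S T N) x)) '' UIter S T N

/-- Rychlik's setting: `X = [0,1]` with Lebesgue measure, `S ⊆ X` a closed null set
containing the endpoints, `U = X ∖ S`, `T : U → X` a map which on the closure of each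
connected component of `U` extends to a homeomorphism onto a subinterval of `X`, and
`g : X → [0,∞)` a bounded function of bounded variation vanishing on `S` such that the
transfer operator `P` preserves Lebesgue measure. -/
structure RychlikSystem where
  S : Set ℝ
  T : ℝ → ℝ
  g : ℝ → ℝ
  S_subset : S ⊆ Icc 0 1
  S_closed : IsClosed S
  S_null : volume S = 0
  zero_mem : (0:ℝ) ∈ S
  one_mem : (1:ℝ) ∈ S
  T_mapsTo : MapsTo T (Icc 0 1 \ S) (Icc 0 1)
  branch : ∀ x ∈ Icc (0:ℝ) 1 \ S, ∃ e : ℝ → ℝ,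
    EqOn e T (connectedComponentIn (Icc 0 1 \ S) x) ∧
    ContinuousOn e (closure (connectedComponentIn (Icc 0 1 \ S) x)) ∧
    InjOn e (closure (connectedComponentIn (Icc 0 1 \ S) x)) ∧
    e '' closure (connectedComponentIn (Icc 0 1 \ S) x) ⊆ Icc 0 1
  g_nonneg : ∀ x, 0 ≤ g x
  g_bdd : ∃ K, ∀ x, g x ≤ K
  g_bv : BoundedVariationOn g (Icc 0 1)
  g_zero_on_S : ∀ x ∈ S, g x = 0
  P_preserves : ∀ f : ℝ → ℝ, Measurable f → (∃ K, ∀ x, |f x| ≤ K) →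
    ∫ x in Icc (0:ℝ) 1, transferOp T g f x = ∫ x in Icc (0:ℝ) 1, f x

/-! `g_{N+1} = g · (g_N ∘ T)`, and on every gap of `S` the map `T` is a monotone homeomorphism onto
its image, so `g_N ∘ T` varies there by at most `var g_N`. Since `g` vanishes on `S`, a potential
that telescopes along partitions gives `var g_{N+1} ≤ (var g_N + ‖g‖_∞^N) · var g`, hence every
`g_N` has bounded variation.

For a function `f` of bounded variation with values in `[0, M]`, take a partition whose sum
`∑ |f(t_{i+1}) - f(t_i)|` is within `ε` of the total variation. By additivity of the variation,
on each piece the variation exceeds `|f(t_{i+1}) - f(t_i)| ≤ M` by less than `ε`. -/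

open scoped ENNReal

theorem Finset.lt_add_of_sum_lt_sum_add {ι M : Type*} [AddCommMonoid M] [LinearOrder M]
    [IsOrderedAddMonoid M] {s : Finset ι} {x y : ι → M} {δ : M} (hyx : ∀ i ∈ s, y i ≤ x i)
    (h : ∑ i ∈ s, x i < ∑ i ∈ s, y i + δ) {j : ι} (hj : j ∈ s) : x j < y j + δ := by
  classical
  by_contra! hxj
  refine h.not_ge ?_
  calc ∑ i ∈ s, y i + δ = y j + δ + ∑ i ∈ s.erase j, y i := by
        rw [← Finset.add_sum_erase s y hj, add_right_comm]
    _ ≤ x j + ∑ i ∈ s.erase j, x i :=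
        add_le_add hxj (Finset.sum_le_sum fun i hi => hyx i (Finset.mem_of_mem_erase hi))
    _ = ∑ i ∈ s, x i := Finset.add_sum_erase s x hj

theorem Monotone.exists_strictMono_steps {α : Type*} [PartialOrder α] {u : ℕ → α}
    (hu : Monotone u) (P : α → α → Prop) {n : ℕ} (hP : ∀ i < n, P (u i) (u (i + 1))) :
    ∃ (m : ℕ) (t : ℕ → α), t 0 = u 0 ∧ t m = u n ∧ (∀ j < m, t j < t (j + 1)) ∧
      ∀ j < m, P (t j) (t (j + 1)) := by
  induction n with
  | zero => exact ⟨0, u, rfl, rfl, by simp, by simp⟩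
  | succ n ih =>
    obtain ⟨m, t, ht0, htm, ht_lt, htP⟩ := ih fun i hi => hP i (by omega)
    rcases (hu n.le_succ).eq_or_lt with heq | hlt
    · exact ⟨m, t, ht0, htm.trans heq, ht_lt, htP⟩
    refine ⟨m + 1, fun j => if j ≤ m then t j else u (n + 1), by simpa using ht0, by simp,
      fun j hj => ?_, fun j hj => ?_⟩
    · rcases Nat.lt_succ_iff_lt_or_eq.1 hj with hj | rfl
      · simpa [hj.le, Nat.succ_le_of_lt hj] using ht_lt j hj
      · simpa [htm] using hlt
    · rcases Nat.lt_succ_iff_lt_or_eq.1 hj with hj | rfl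
      · simpa [hj.le, Nat.succ_le_of_lt hj] using htP j hj
      · simpa [htm] using hP n n.lt_succ_self

theorem eVariationOn_Icc_add_Icc {α E : Type*} [LinearOrder α] [PseudoEMetricSpace E]
    (f : α → E) {a b c : α} (hab : a ≤ b) (hbc : b ≤ c) :
    eVariationOn f (Icc a b) + eVariationOn f (Icc b c) = eVariationOn f (Icc a c) := by
  rw [← eVariationOn.union f ⟨right_mem_Icc.2 hab, fun _ h => h.2⟩
    ⟨left_mem_Icc.2 hbc, fun _ h => h.1⟩, Icc_union_Icc_eq_Icc hab hbc]

theorem enorm_le_eVariationOn_of_eq_zero {α E : Type*} [LinearOrder α]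
    [SeminormedAddCommGroup E] {g : α → E} {s : Set α} {x y : α} (hx : x ∈ s) (hy : y ∈ s)
    (hy0 : g y = 0) : ‖g x‖ₑ ≤ eVariationOn g s := by
  simpa [edist_eq_enorm_sub, hy0] using eVariationOn.edist_le g hx hy

namespace eVariationOn

variable {α : Type*} [LinearOrder α] {E : Type*} [PseudoEMetricSpace E]

theorem le_of_edist_add_le {f : α → E} {s : Set α} {Φ : α → ℝ≥0∞} {B : ℝ≥0∞}
    (hΦ : ∀ x ∈ s, ∀ y ∈ s, x ≤ y → edist (f y) (f x) + Φ x ≤ Φ y)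
    (hB : ∀ x ∈ s, Φ x ≤ B) : eVariationOn f s ≤ B := by
  refine iSup_le fun ⟨n, u, hu, hus⟩ => ?_
  have telescope : ∀ n, ∑ i ∈ Finset.range n, edist (f (u (i + 1))) (f (u i)) + Φ (u 0)
      ≤ Φ (u n) := by
    intro n
    induction n with
    | zero => simp
    | succ n ih =>
      calc ∑ i ∈ Finset.range (n + 1), edist (f (u (i + 1))) (f (u i)) + Φ (u 0)
          = edist (f (u (n + 1))) (f (u n))
            + (∑ i ∈ Finset.range n, edist (f (u (i + 1))) (f (u i)) + Φ (u 0)) := by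
            rw [Finset.sum_range_succ]; ring
        _ ≤ edist (f (u (n + 1))) (f (u n)) + Φ (u n) := by gcongr
        _ ≤ Φ (u (n + 1)) := hΦ _ (hus n) _ (hus (n + 1)) (hu n.le_succ)
  exact (le_self_add.trans (telescope n)).trans (hB _ (hus n))

theorem exists_lt_sum_add {f : α → E} {s : Set α} (hs : s.Nonempty)
    (hf : BoundedVariationOn f s) {δ : ℝ≥0∞} (hδ : δ ≠ 0) :
    ∃ (n : ℕ) (u : ℕ → α), Monotone u ∧ (∀ i, u i ∈ s) ∧
      eVariationOn f s < ∑ i ∈ Finset.range n, edist (f (u (i + 1))) (f (u i)) + δ := by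
  obtain ⟨x, hx⟩ := hs
  have : Nonempty (ℕ × { u : ℕ → α // Monotone u ∧ ∀ i, u i ∈ s }) :=
    ⟨(0, ⟨fun _ => x, monotone_const, fun _ => hx⟩)⟩
  have h := ENNReal.lt_add_right hf hδ
  conv_rhs at h => rw [eVariationOn, ENNReal.iSup_add]
  obtain ⟨⟨n, u, hu, hus⟩, hlt⟩ := lt_iSup_iff.1 h
  exact ⟨n, u, hu, hus, hlt⟩

theorem exists_monotone_partition_lt_sum_add {f : α → E} {a b : α} (hab : a ≤ b)
    (hf : BoundedVariationOn f (Icc a b)) {δ : ℝ≥0∞} (hδ : δ ≠ 0) :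
    ∃ (n : ℕ) (u : ℕ → α), Monotone u ∧ (∀ i, u i ∈ Icc a b) ∧ u 0 = a ∧ u n = b ∧
      eVariationOn f (Icc a b) < ∑ i ∈ Finset.range n, edist (f (u (i + 1))) (f (u i)) + δ := by
  obtain ⟨m, u, hu, hus, hlt⟩ := exists_lt_sum_add (nonempty_Icc.2 hab) hf hδ
  set w : ℕ → α := fun i => if i = 0 then a else if i ≤ m + 1 then u (i - 1) else b
  have hw : Monotone w := by
    intro i j hij
    simp only [w]
    split_ifs <;> first
      | exact le_rfl | exact (hus _).1 | exact (hus _).2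
      | exact hab | exact hu (by omega) | omega
  refine ⟨m + 2, w, hw, fun i => ?_, rfl, by simp [w], hlt.trans_le ?_⟩
  · simp only [w]
    split_ifs
    exacts [left_mem_Icc.2 hab, hus _, right_mem_Icc.2 hab]
  gcongr
  calc ∑ i ∈ Finset.range m, edist (f (u (i + 1))) (f (u i))
      = ∑ i ∈ Finset.range m, edist (f (w (i + 2))) (f (w (i + 1))) := by
        refine Finset.sum_congr rfl fun i hi => ?_
        have hi := Finset.mem_range.1 hi
        simp only [w, if_neg (Nat.succ_ne_zero _), if_pos (show i + 2 ≤ m + 1 by omega),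
          if_pos (show i + 1 ≤ m + 1 by omega)]
        rfl
    _ ≤ ∑ i ∈ Finset.range (m + 2), edist (f (w (i + 1))) (f (w i)) := by
        rw [Finset.sum_range_succ', Finset.sum_range_succ]
        exact le_add_right (le_add_right le_rfl)

theorem exists_partition_lt_add {f : α → E} {a b : α} (hab : a ≤ b)
    (hf : BoundedVariationOn f (Icc a b)) {D : ℝ≥0∞}
    (hD : ∀ x ∈ Icc a b, ∀ y ∈ Icc a b, edist (f x) (f y) ≤ D) {δ : ℝ≥0∞} (hδ : δ ≠ 0) :
    ∃ (n : ℕ) (t : ℕ → α), t 0 = a ∧ t n = b ∧ (∀ i < n, t i < t (i + 1)) ∧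
      ∀ i < n, eVariationOn f (Icc (t i) (t (i + 1))) < D + δ := by
  obtain ⟨n, u, hu, hus, hu0, hun, hlt⟩ := exists_monotone_partition_lt_sum_add hab hf hδ
  have hpiece : ∀ i < n, eVariationOn f (Icc (u i) (u (i + 1))) < D + δ := by
    intro i hi
    refine (Finset.lt_add_of_sum_lt_sum_add (x := fun j => eVariationOn f (Icc (u j) (u (j + 1))))
      (y := fun j => edist (f (u (j + 1))) (f (u j))) (fun j _ => edist_le f ?_ ?_) ?_
      (Finset.mem_range.2 hi)).trans_le (by gcongr; exact hD _ (hus _) _ (hus _))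
    · exact right_mem_Icc.2 (hu j.le_succ)
    · exact left_mem_Icc.2 (hu j.le_succ)
    · rwa [sum' f hu, hu0, hun]
  obtain ⟨m, t, ht0, htm, ht_lt, htP⟩ :=
    hu.exists_strictMono_steps (fun x y => eVariationOn f (Icc x y) < D + δ) hpiece
  exact ⟨m, t, ht0.trans hu0, htm.trans hun, ht_lt, htP⟩

end eVariationOn

noncomputable def lastPointBelow (S : Set ℝ) (x : ℝ) : ℝ := sSup (S ∩ Iic x)

section LastPointBelow

variable {S : Set ℝ} {a x y z : ℝ}

theorem le_lastPointBelow (hz : z ∈ S) (hzx : z ≤ x) : z ≤ lastPointBelow S x :=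
  le_csSup ⟨x, fun _ h => h.2⟩ ⟨hz, hzx⟩

theorem lastPointBelow_mem (hS : IsClosed S) (ha : a ∈ S) (hax : a ≤ x) :
    lastPointBelow S x ∈ S ∩ Icc a x :=
  have h := (hS.inter isClosed_Iic).csSup_mem ⟨a, ha, hax⟩ ⟨x, fun _ h => h.2⟩
  ⟨h.1, le_lastPointBelow ha hax, h.2⟩

theorem lastPointBelow_eq (hS : IsClosed S) (ha : a ∈ S) (hax : a ≤ x) (hxy : x ≤ y)
    (hd : Disjoint (Icc x y) S) : lastPointBelow S y = lastPointBelow S x := by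
  obtain ⟨hxS, -, hx⟩ := lastPointBelow_mem hS ha hax
  obtain ⟨hyS, -, hy⟩ := lastPointBelow_mem hS ha (hax.trans hxy)
  have hyx : lastPointBelow S y < x :=
    not_le.1 fun h => hd.notMem_of_mem_left ⟨h, hy⟩ hyS
  exact (le_lastPointBelow hyS hyx.le).antisymm (le_lastPointBelow hxS (hx.trans hxy))

theorem Ioc_lastPointBelow_subset {b : ℝ} (hS : IsClosed S) (ha : a ∈ S) (hx : x ∈ Icc a b) :
    Ioc (lastPointBelow S x) x ⊆ Icc a b \ S := fun _ hz =>
  ⟨⟨(lastPointBelow_mem hS ha hx.1).2.1.trans hz.1.le, hz.2.trans hx.2⟩,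
    fun hzS => hz.1.not_ge (le_lastPointBelow hzS hz.2)⟩

end LastPointBelow

section ProductVariation

variable {S : Set ℝ} {a b x y : ℝ} {g h : ℝ → ℝ} {K V : ℝ≥0∞}

/-- With `L` the last point of `S` below `x`: inside the gap `(L, x]` of `S` the middle term
accumulates the products `g · Δh`; when a point of `S` is crossed it is absorbed into the first
term, because `h` varies by at most `V` on each gap. -/
noncomputable def mulVariationPotential (S : Set ℝ) (a : ℝ) (g h : ℝ → ℝ) (K V : ℝ≥0∞)
    (x : ℝ) : ℝ≥0∞ :=
  V * eVariationOn g (Icc a (lastPointBelow S x))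
    + eVariationOn g (Icc (lastPointBelow S x) x) * eVariationOn h (Ioc (lastPointBelow S x) x)
    + K * eVariationOn g (Icc a x)

theorem mulVariationPotential_le (hS : IsClosed S) (ha : a ∈ S)
    (hV : ∀ c d, Ioc c d ⊆ Icc a b \ S → eVariationOn h (Ioc c d) ≤ V) (hx : x ∈ Icc a b) :
    mulVariationPotential S a g h K V x ≤ (V + K) * eVariationOn g (Icc a x) := by
  obtain ⟨-, haL, hLx⟩ := lastPointBelow_mem hS ha hx.1
  calc mulVariationPotential S a g h K V x
      ≤ V * eVariationOn g (Icc a (lastPointBelow S x))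
        + eVariationOn g (Icc (lastPointBelow S x) x) * V + K * eVariationOn g (Icc a x) := by
        unfold mulVariationPotential
        gcongr
        exact hV _ _ (Ioc_lastPointBelow_subset hS ha hx)
    _ = (V + K) * eVariationOn g (Icc a x) := by
        rw [mul_comm _ V, ← mul_add, eVariationOn_Icc_add_Icc g haL hLx, add_mul]

theorem edist_mul_add_mulVariationPotential_le_of_disjoint (hS : IsClosed S) (ha : a ∈ S)
    (hgS : ∀ z ∈ S, g z = 0) (hK : ∀ z, ‖h z‖ₑ ≤ K) (hax : a ≤ x) (hxy : x ≤ y)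
    (hd : Disjoint (Icc x y) S) :
    edist ((g * h) y) ((g * h) x) + mulVariationPotential S a g h K V x
      ≤ mulVariationPotential S a g h K V y := by
  obtain ⟨hLS, -, hLx⟩ := lastPointBelow_mem hS ha hax
  set L := lastPointBelow S x
  have hLx' : L < x := hLx.lt_of_ne fun h => hd.notMem_of_mem_left (left_mem_Icc.2 hxy) (h ▸ hLS)
  have hgy : ‖g y‖ₑ ≤ eVariationOn g (Icc L y) :=
    enorm_le_eVariationOn_of_eq_zero (right_mem_Icc.2 (hLx.trans hxy))
      (left_mem_Icc.2 (hLx.trans hxy)) (hgS L hLS)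
  have hh : edist (h y) (h x) + eVariationOn h (Ioc L x) ≤ eVariationOn h (Ioc L y) := by
    rw [← Ioc_union_Icc_eq_Ioc hLx' hxy, eVariationOn.union h
      ⟨right_mem_Ioc.2 hLx', fun _ h => h.2⟩ ⟨left_mem_Icc.2 hxy, fun _ h => h.1⟩, add_comm]
    gcongr
    exact eVariationOn.edist_le h (right_mem_Icc.2 hxy) (left_mem_Icc.2 hxy)
  have hg : edist (g y) (g x) + eVariationOn g (Icc a x) ≤ eVariationOn g (Icc a y) := by
    rw [← eVariationOn_Icc_add_Icc g hax hxy, add_comm]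
    gcongr
    exact eVariationOn.edist_le g (right_mem_Icc.2 hxy) (left_mem_Icc.2 hxy)
  have hgh :
      edist ((g * h) y) ((g * h) x) ≤ ‖g y‖ₑ * edist (h y) (h x) + K * edist (g y) (g x) := by
    simp only [Pi.mul_apply, edist_eq_enorm_sub]
    calc ‖g y * h y - g x * h x‖ₑ = ‖g y * (h y - h x) + (g y - g x) * h x‖ₑ := by ring_nf
      _ ≤ ‖g y‖ₑ * ‖h y - h x‖ₑ + ‖g y - g x‖ₑ * ‖h x‖ₑ := by
        simpa only [enorm_mul] using enorm_add_le (g y * (h y - h x)) ((g y - g x) * h x)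
      _ ≤ ‖g y‖ₑ * ‖h y - h x‖ₑ + K * ‖g y - g x‖ₑ := by rw [mul_comm K]; gcongr; exact hK x
  unfold mulVariationPotential
  rw [lastPointBelow_eq hS ha hax hxy hd]
  calc edist ((g * h) y) ((g * h) x) + (V * eVariationOn g (Icc a L)
        + eVariationOn g (Icc L x) * eVariationOn h (Ioc L x) + K * eVariationOn g (Icc a x))
      ≤ V * eVariationOn g (Icc a L) + (‖g y‖ₑ * edist (h y) (h x)
        + eVariationOn g (Icc L x) * eVariationOn h (Ioc L x))
        + (K * edist (g y) (g x) + K * eVariationOn g (Icc a x)) := by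
        grw [hgh]; apply le_of_eq; ring
    _ ≤ V * eVariationOn g (Icc a L) + eVariationOn g (Icc L y)
          * (edist (h y) (h x) + eVariationOn h (Ioc L x))
        + K * (edist (g y) (g x) + eVariationOn g (Icc a x)) := by
        rw [mul_add, mul_add]
        gcongr
        exact eVariationOn.mono g (Icc_subset_Icc_right hxy)
    _ ≤ _ := by gcongr

theorem edist_mul_add_mulVariationPotential_le_of_mem {s : ℝ} (hS : IsClosed S) (ha : a ∈ S)
    (hgS : ∀ z ∈ S, g z = 0) (hK : ∀ z, ‖h z‖ₑ ≤ K)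
    (hV : ∀ c d, Ioc c d ⊆ Icc a b \ S → eVariationOn h (Ioc c d) ≤ V)
    (hx : x ∈ Icc a b) (hs : s ∈ S) (hxs : x ≤ s) (hsy : s ≤ y) :
    edist ((g * h) y) ((g * h) x) + mulVariationPotential S a g h K V x
      ≤ mulVariationPotential S a g h K V y := by
  have hgh : edist ((g * h) y) ((g * h) x) ≤ K * eVariationOn g (Icc x y) := by
    simp only [Pi.mul_apply, edist_eq_enorm_sub]
    calc ‖g y * h y - g x * h x‖ₑ ≤ ‖g y‖ₑ * ‖h y‖ₑ + ‖g x‖ₑ * ‖h x‖ₑ := by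
          simpa only [enorm_mul] using enorm_sub_le (a := g y * h y) (b := g x * h x)
      _ ≤ K * (eVariationOn g (Icc x s) + eVariationOn g (Icc s y)) := by
          rw [mul_add, add_comm, mul_comm K, mul_comm K]
          gcongr
          · exact enorm_le_eVariationOn_of_eq_zero (left_mem_Icc.2 hxs) (right_mem_Icc.2 hxs)
              (hgS s hs)
          · exact hK x
          · exact enorm_le_eVariationOn_of_eq_zero (right_mem_Icc.2 hsy) (left_mem_Icc.2 hsy)
              (hgS s hs)
          · exact hK y
      _ = K * eVariationOn g (Icc x y) := by rw [eVariationOn_Icc_add_Icc g hxs hsy]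
  have hsL : s ≤ lastPointBelow S y := le_lastPointBelow hs hsy
  calc edist ((g * h) y) ((g * h) x) + mulVariationPotential S a g h K V x
      ≤ K * eVariationOn g (Icc x y) + (V + K) * eVariationOn g (Icc a x) :=
        add_le_add hgh (mulVariationPotential_le hS ha hV hx)
    _ = V * eVariationOn g (Icc a x) + K * eVariationOn g (Icc a y) := by
        rw [← eVariationOn_Icc_add_Icc g hx.1 (hxs.trans hsy)]; ring
    _ ≤ mulVariationPotential S a g h K V y := by
        unfold mulVariationPotential
        gcongr
        refine le_add_right ?_
        gcongr
        exact eVariationOn.mono g (Icc_subset_Icc_right (hxs.trans hsL))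

theorem eVariationOn_mul_le (hS : IsClosed S) (ha : a ∈ S) (hgS : ∀ z ∈ S, g z = 0)
    (hK : ∀ z, ‖h z‖ₑ ≤ K) (hV : ∀ c d, Ioc c d ⊆ Icc a b \ S → eVariationOn h (Ioc c d) ≤ V) :
    eVariationOn (g * h) (Icc a b) ≤ (V + K) * eVariationOn g (Icc a b) := by
  refine eVariationOn.le_of_edist_add_le (Φ := mulVariationPotential S a g h K V)
    (fun x hx y hy hxy => ?_) fun x hx => ?_
  · by_cases hd : Disjoint (Icc x y) S
    · exact edist_mul_add_mulVariationPotential_le_of_disjoint hS ha hgS hK hx.1 hxy hd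
    · obtain ⟨s, hs, hsS⟩ := not_disjoint_iff.1 hd
      exact edist_mul_add_mulVariationPotential_le_of_mem hS ha hgS hK hV hx hsS hs.1 hs.2
  · grw [mulVariationPotential_le hS ha hV hx, eVariationOn.mono g (Icc_subset_Icc_right hx.2)]

end ProductVariation

theorem gIter_zero (T g : ℝ → ℝ) : gIter T g 0 = 1 := by
  funext x; simp [gIter]

theorem gIter_succ (T g : ℝ → ℝ) (N : ℕ) : gIter T g (N + 1) = g * (gIter T g N ∘ T) := by
  funext x
  simp only [gIter, Finset.prod_range_succ', Function.iterate_succ_apply,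
    Function.iterate_zero_apply, Pi.mul_apply, Function.comp_apply]
  ring

theorem gIter_nonneg {T g : ℝ → ℝ} (hg : ∀ x, 0 ≤ g x) (N : ℕ) (x : ℝ) : 0 ≤ gIter T g N x :=
  Finset.prod_nonneg fun _ _ => hg _

theorem gIter_le_pow {T g : ℝ → ℝ} {K : ℝ} (hg : ∀ x, 0 ≤ g x) (hK : ∀ x, g x ≤ K) (N : ℕ)
    (x : ℝ) : gIter T g N x ≤ K ^ N := by
  simpa [gIter] using
    Finset.prod_le_prod (s := Finset.range N) (fun _ _ => hg _) fun k _ => hK (T^[k] x)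

namespace RychlikSystem

theorem eVariationOn_comp_T_le (R : RychlikSystem) (f : ℝ → ℝ) {a b : ℝ}
    (hab : Ioc a b ⊆ Icc 0 1 \ R.S) :
    eVariationOn (f ∘ R.T) (Ioc a b) ≤ eVariationOn f (Icc 0 1) := by
  rcases le_or_gt b a with hba | hab'
  · simp [Ioc_eq_empty hba.not_gt]
  obtain ⟨e, hTe, he_cont, he_inj, he_maps⟩ := R.branch b (hab (right_mem_Ioc.2 hab'))
  have hC : Ioc a b ⊆ connectedComponentIn (Icc 0 1 \ R.S) b :=
    isPreconnected_Ioc.subset_connectedComponentIn (right_mem_Ioc.2 hab') hab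
  have hCl : Icc a b ⊆ closure (connectedComponentIn (Icc 0 1 \ R.S) b) :=
    closure_Ioc hab'.ne ▸ closure_mono hC
  have hmaps : MapsTo e (Ioc a b) (Icc 0 1) := fun x hx =>
    he_maps (mem_image_of_mem e (hCl (Ioc_subset_Icc_self hx)))
  rw [eVariationOn.eq_of_eqOn (f := f ∘ R.T) (f' := f ∘ e) fun x hx =>
    congrArg f (hTe (hC hx)).symm]
  rcases (he_cont.mono hCl).strictMonoOn_of_injOn_Icc' hab'.le (he_inj.mono hCl) with hm | hm
  · exact eVariationOn.comp_le_of_monotoneOn f e (hm.monotoneOn.mono Ioc_subset_Icc_self) hmaps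
  · exact eVariationOn.comp_le_of_antitoneOn f e (hm.antitoneOn.mono Ioc_subset_Icc_self) hmaps

theorem boundedVariationOn_gIter (R : RychlikSystem) (N : ℕ) :
    BoundedVariationOn (gIter R.T R.g N) (Icc 0 1) := by
  induction N with
  | zero => simp [BoundedVariationOn, gIter_zero, eVariationOn.constant_on]
  | succ N ih =>
    obtain ⟨K, hK⟩ := R.g_bdd
    have hh : ∀ x, ‖(gIter R.T R.g N ∘ R.T) x‖ₑ ≤ ENNReal.ofReal (K ^ N) := fun x => by
      rw [Function.comp_apply, Real.enorm_eq_ofReal_abs,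
        abs_of_nonneg (gIter_nonneg R.g_nonneg N _)]
      exact ENNReal.ofReal_le_ofReal (gIter_le_pow R.g_nonneg hK N _)
    rw [BoundedVariationOn, gIter_succ]
    refine ne_top_of_le_ne_top ?_ (eVariationOn_mul_le R.S_closed R.zero_mem R.g_zero_on_S hh
      fun c d hcd => R.eVariationOn_comp_T_le _ hcd)
    exact ENNReal.mul_ne_top (ENNReal.add_ne_top.2 ⟨ih, ENNReal.ofReal_ne_top⟩) R.g_bv

end RychlikSystem

theorem stmt2_general (R : RychlikSystem) (ε : ℝ) (hε : 0 < ε) (N : ℕ) :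
    ∃ (n : ℕ) (t : ℕ → ℝ), t 0 = 0 ∧ t n = 1 ∧ (∀ i < n, t i < t (i + 1)) ∧
      ∀ i < n, eVariationOn (gIter R.T R.g N) (Icc (t i) (t (i + 1))) <
        ENNReal.ofReal (supNorm01 (gIter R.T R.g N) + ε) := by
  obtain ⟨K, hK⟩ := R.g_bdd
  set f := gIter R.T R.g N
  have hbdd : BddAbove (f '' Icc 0 1) :=
    ⟨K ^ N, by rintro _ ⟨x, -, rfl⟩; exact gIter_le_pow R.g_nonneg hK N x⟩
  have hM : ∀ x ∈ Icc (0 : ℝ) 1, f x ∈ Icc 0 (supNorm01 f) := fun x hx =>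
    ⟨gIter_nonneg R.g_nonneg N x, le_csSup hbdd (mem_image_of_mem f hx)⟩
  have hosc : ∀ x ∈ Icc (0 : ℝ) 1, ∀ y ∈ Icc (0 : ℝ) 1,
      edist (f x) (f y) ≤ ENNReal.ofReal (supNorm01 f) := fun x hx y hy => by
    rw [edist_dist]
    exact ENNReal.ofReal_le_ofReal (by simpa using Real.dist_le_of_mem_Icc (hM x hx) (hM y hy))
  have hM0 : 0 ≤ supNorm01 f :=
    Real.sSup_nonneg (by rintro _ ⟨x, -, rfl⟩; exact gIter_nonneg R.g_nonneg N x)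
  rw [ENNReal.ofReal_add hM0 hε.le]
  exact eVariationOn.exists_partition_lt_add zero_le_one (R.boundedVariationOn_gIter N) hosc
    (ENNReal.ofReal_pos.2 hε).ne'

/-- For every `ε > 0` and `N ≥ 1` there is a finite partition
`0 = t 0 < t 1 < ⋯ < t n = 1` of `X` into intervals such that
`var_A(g_N) < ‖g_N‖_∞ + ε` on each piece `A = [t i, t (i+1)]`. -/
theorem stmt2 (R : RychlikSystem) (ε : ℝ) (hε : 0 < ε) (N : ℕ) (hN : 1 ≤ N) :
    ∃ (n : ℕ) (t : ℕ → ℝ), t 0 = 0 ∧ t n = 1 ∧ (∀ i < n, t i < t (i + 1)) ∧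
      ∀ i < n, eVariationOn (gIter R.T R.g N) (Icc (t i) (t (i + 1))) <
        ENNReal.ofReal (supNorm01 (gIter R.T R.g N) + ε) :=
  stmt2_general R ε hε N
end

section
/- There exists a constant C₀ > 0, depending only on τ̇, such that for every δ ∈ (0,1): sup_{x ∈ [0,1]} |τ_δ⁻¹(x) − τ⁻¹(x)| ≤ C₀·δ. (Both τ and τ_δ are strictly increasing bijections of ℝ, so their inverses are well defined.) -/
open MeasureTheory Set intervalIntegral

/-- The centered Gaussian density `φ_δ` with standard deviation `δ`. -/
noncomputable def gaussKer (δ : ℝ) : ℝ → ℝ := fun x =>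
  (δ * Real.sqrt (2 * Real.pi))⁻¹ * Real.exp (-(x ^ 2) / (2 * δ ^ 2))

/-- Convolution `f * φ_δ` over `ℝ`. -/
noncomputable def convGauss (f : ℝ → ℝ) (δ : ℝ) : ℝ → ℝ := fun x =>
  ∫ y : ℝ, f y * gaussKer δ (x - y)

/-- `τ(x) = ∫₀ˣ τ̇(u) du`. -/
noncomputable def tauOf (τdot : ℝ → ℝ) : ℝ → ℝ := fun x => ∫ u in (0:ℝ)..x, τdot u

/-- `τ_δ = τ * φ_δ − (τ * φ_δ)(0)`. -/
noncomputable def tauDelta (τdot : ℝ → ℝ) (δ : ℝ) : ℝ → ℝ := fun x =>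
  convGauss (tauOf τdot) δ x - convGauss (tauOf τdot) δ 0
open Filter Real ProbabilityTheory NNReal

/-!
The primitive `τ` is `K`-Lipschitz and `c`-expanding (`c (y - x) ≤ τ y - τ x` for `x ≤ y`), where
`K` bounds `τ̇` (bounded variation plus periodicity) and `c > 0` is an a.e. lower bound of `τ̇`.
Convolving with `φ_δ` is averaging over translates, `x ↦ 𝔼 τ (x + Z)` with `Z ∼ 𝒩(0, δ²)`; this
keeps both properties and moves `τ` by at most `K 𝔼|Z| ≤ K δ`, so `|τ_δ - τ| ≤ 2 K δ`. For a
`c`-expanding `f`, `|g⁻¹ - f⁻¹| ≤ sup |f - g| / c`, whence `C₀ = 2 K / c`.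
-/

section InverseOfExpanding

variable {f g : ℝ → ℝ} {c : ℝ}

lemma surjective_of_expanding (hc : 0 < c) (hf : Continuous f)
    (hexp : ∀ x y, x ≤ y → c * (y - x) ≤ f y - f x) : Function.Surjective f := by
  refine hf.surjective ?_ ?_
  · refine tendsto_atTop_mono' _ ?_ (tendsto_atTop_add_const_left atTop (f 0)
      (tendsto_id.const_mul_atTop hc))
    filter_upwards [eventually_ge_atTop 0] with x hx
    change f 0 + c * x ≤ f x
    linarith [hexp 0 x hx]
  · refine tendsto_atBot_mono' _ ?_ (tendsto_atBot_add_const_left atBot (f 0)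
      (tendsto_id.const_mul_atBot hc))
    filter_upwards [eventually_le_atBot 0] with x hx
    change f x ≤ f 0 + c * x
    linarith [hexp x 0 hx]

lemma abs_invFun_sub_invFun_le {ε : ℝ} (hc : 0 < c) (hf : Continuous f)
    (hexp : ∀ x y, x ≤ y → c * (y - x) ≤ f y - f x) (hg : Function.Surjective g)
    (hfg : ∀ x, |f x - g x| ≤ ε) (x : ℝ) :
    |Function.invFun g x - Function.invFun f x| ≤ ε / c := by
  set a := Function.invFun g x
  set b := Function.invFun f x
  have hga : g a = x := Function.invFun_eq (hg x)
  have hfb : f b = x := Function.invFun_eq (surjective_of_expanding hc hf hexp x)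
  have hab : c * |a - b| ≤ |f a - f b| := by
    rcases le_total a b with h | h
    · rw [abs_sub_comm a, abs_sub_comm (f a), abs_of_nonneg (sub_nonneg.2 h)]
      exact (hexp a b h).trans (le_abs_self _)
    · rw [abs_of_nonneg (sub_nonneg.2 h)]
      exact (hexp b a h).trans (le_abs_self _)
  rw [le_div_iff₀ hc, mul_comm]
  calc c * |a - b| ≤ |f a - f b| := hab
    _ = |f a - g a| := by rw [hfb, hga]
    _ ≤ ε := hfg a

end InverseOfExpanding

section TranslationAverage

variable {P : Measure ℝ} [IsProbabilityMeasure P] {f : ℝ → ℝ} {K : ℝ≥0}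

lemma LipschitzWith.integrable_comp_const_add (hf : LipschitzWith K f) (hP : Integrable id P)
    (x : ℝ) : Integrable (fun z => f (x + z)) P := by
  refine Integrable.mono' ((integrable_const |f x|).add (hP.abs.const_mul K))
    (hf.continuous.comp (continuous_const_add x)).aestronglyMeasurable (ae_of_all _ fun z => ?_)
  have := hf.dist_le_mul (x + z) x
  rw [Real.dist_eq, Real.dist_eq, add_sub_cancel_left] at this
  change |f (x + z)| ≤ |f x| + K * |z|
  linarith [abs_sub_abs_le_abs_sub (f (x + z)) (f x)]

lemma integral_comp_const_add_sub (hf : LipschitzWith K f) (hP : Integrable id P) (x y : ℝ) :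
    ∫ z, f (y + z) ∂P - ∫ z, f (x + z) ∂P = ∫ z, (f (y + z) - f (x + z)) ∂P :=
  (integral_sub (hf.integrable_comp_const_add hP y) (hf.integrable_comp_const_add hP x)).symm

lemma LipschitzWith.integral_comp_const_add (hf : LipschitzWith K f) (hP : Integrable id P) :
    LipschitzWith K (fun x => ∫ z, f (x + z) ∂P) := by
  refine LipschitzWith.of_dist_le_mul fun y x => ?_
  rw [Real.dist_eq, integral_comp_const_add_sub hf hP, ← Real.norm_eq_abs]
  simpa using norm_integral_le_of_norm_le_const (μ := P) (f := fun z => f (y + z) - f (x + z))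
    (ae_of_all _ fun z => by simpa [Real.dist_eq] using hf.dist_le_mul (y + z) (x + z))

lemma integral_comp_const_add_expanding {c : ℝ} (hf : LipschitzWith K f) (hP : Integrable id P)
    (hexp : ∀ x y, x ≤ y → c * (y - x) ≤ f y - f x) {x y : ℝ} (hxy : x ≤ y) :
    c * (y - x) ≤ ∫ z, f (y + z) ∂P - ∫ z, f (x + z) ∂P := by
  rw [integral_comp_const_add_sub hf hP]
  calc c * (y - x) = ∫ _, c * (y - x) ∂P := by simp
    _ ≤ _ := integral_mono (integrable_const _)
        ((hf.integrable_comp_const_add hP y).sub (hf.integrable_comp_const_add hP x)) fun z => by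
      simpa using hexp (x + z) (y + z) (by linarith)

lemma abs_integral_comp_const_add_sub_le (hf : LipschitzWith K f) (hP : Integrable id P) (x : ℝ) :
    |∫ z, f (x + z) ∂P - f x| ≤ K * ∫ z, |z| ∂P := by
  have hdiff : ∫ z, f (x + z) ∂P - f x = ∫ z, (f (x + z) - f x) ∂P := by
    rw [integral_sub (hf.integrable_comp_const_add hP x) (integrable_const _),
      MeasureTheory.integral_const]
    simp
  rw [hdiff, ← MeasureTheory.integral_const_mul]
  refine MeasureTheory.abs_integral_le_integral_abs.trans (integral_mono_of_nonneg
    (ae_of_all _ fun _ => abs_nonneg _) (hP.abs.const_mul K) (ae_of_all _ fun z => ?_))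
  simpa [Real.dist_eq] using hf.dist_le_mul (x + z) x

lemma abs_invFun_translationAverage_sub_invFun_le {c : ℝ} (hc : 0 < c)
    (hf : LipschitzWith K f) (hexp : ∀ x y, x ≤ y → c * (y - x) ≤ f y - f x) (hf0 : f 0 = 0)
    (hP : Integrable id P) (x : ℝ) :
    |Function.invFun (fun y => ∫ z, f (y + z) ∂P - ∫ z, f z ∂P) x - Function.invFun f x| ≤
      2 * K * (∫ z, |z| ∂P) / c := by
  set S := fun y => ∫ z, f (y + z) ∂P
  have hS0 : ∫ z, f z ∂P = S 0 := by simp [S]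
  have hclose : ∀ y, |f y - (S y - S 0)| ≤ 2 * K * ∫ z, |z| ∂P := by
    intro y
    have hy := abs_integral_comp_const_add_sub_le hf hP y
    have h0 := abs_integral_comp_const_add_sub_le hf hP 0
    rw [hf0, sub_zero] at h0
    calc |f y - (S y - S 0)| = |(f y - S y) + S 0| := by ring_nf
      _ ≤ |f y - S y| + |S 0| := abs_add_le _ _
      _ ≤ 2 * K * ∫ z, |z| ∂P := by rw [abs_sub_comm]; linarith
  have hexpS : ∀ x y, x ≤ y → c * (y - x) ≤ (S y - S 0) - (S x - S 0) := fun x y hxy => by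
    simpa using integral_comp_const_add_expanding hf hP hexp hxy
  have hsurj := surjective_of_expanding hc
    ((hf.integral_comp_const_add hP).continuous.sub continuous_const) hexpS
  rw [hS0]
  exact abs_invFun_sub_invFun_le hc hf.continuous hexp hsurj hclose x

end TranslationAverage

lemma integral_abs_sub_gaussianReal_le (m : ℝ) (v : ℝ≥0) :
    ∫ z, |z - m| ∂gaussianReal m v ≤ √v := by
  have hL2 : MemLp (fun z => |z - m|) 2 (gaussianReal m v) :=
    ((memLp_id_gaussianReal 2).sub (memLp_const m)).abs
  have hsq : ∫ z, ((fun z => |z - m|) ^ 2) z ∂gaussianReal m v = v := by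
    simp only [Pi.pow_apply, sq_abs]
    rw [← variance_id_gaussianReal (μ := m) (v := v), variance_eq_integral measurable_id.aemeasurable]
    simp only [id_eq, integral_id_gaussianReal]
  -- `(𝔼 X)² ≤ 𝔼 X²` for `X = |Z - m|`, since `Var X ≥ 0`
  have hvar := variance_nonneg (fun z => |z - m|) (gaussianReal m v)
  rw [variance_eq_sub hL2] at hvar
  refine (le_abs_self _).trans (Real.abs_le_sqrt ?_)
  linarith

lemma convGauss_eq_integral_gaussianReal {δ : ℝ} (hδ : 0 < δ) (f : ℝ → ℝ) (x : ℝ) :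
    convGauss f δ x = ∫ z, f (x + z) ∂gaussianReal 0 (δ ^ 2).toNNReal := by
  have hv : (δ ^ 2).toNNReal ≠ 0 := by simp [hδ.ne']
  have hker : ∀ z, gaussKer δ (-z) = gaussianPDFReal 0 (δ ^ 2).toNNReal z := by
    intro z
    rw [gaussKer, gaussianPDFReal, Real.coe_toNNReal _ (sq_nonneg δ), sub_zero, neg_sq,
      show 2 * π * δ ^ 2 = δ ^ 2 * (2 * π) by ring, Real.sqrt_mul (sq_nonneg δ),
      Real.sqrt_sq hδ.le]
  rw [integral_gaussianReal_eq_integral_smul hv, convGauss,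
    ← integral_add_left_eq_self _ x]
  simp_rw [smul_eq_mul, ← hker, sub_add_cancel_left, mul_comm]

section Primitive

variable {τdot : ℝ → ℝ}

lemma tauOf_sub (hloc : LocallyIntegrable τdot) (x y : ℝ) :
    tauOf τdot y - tauOf τdot x = ∫ u in x..y, τdot u :=
  integral_interval_sub_left
    (hloc.integrableOn_isCompact isCompact_uIcc).intervalIntegrable
    (hloc.integrableOn_isCompact isCompact_uIcc).intervalIntegrable

lemma lipschitzWith_tauOf {K : ℝ≥0} (hloc : LocallyIntegrable τdot) (hK : ∀ᵐ u, ‖τdot u‖ ≤ K) :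
    LipschitzWith K (tauOf τdot) := by
  refine LipschitzWith.of_dist_le_mul fun y x => ?_
  rw [Real.dist_eq, Real.dist_eq, tauOf_sub hloc x y, ← Real.norm_eq_abs]
  exact norm_integral_le_of_norm_le_const_ae (hK.mono fun u hu _ => hu)

lemma tauOf_expanding {c : ℝ} (hloc : LocallyIntegrable τdot) (hc : ∀ᵐ u, c ≤ τdot u)
    {x y : ℝ} (hxy : x ≤ y) : c * (y - x) ≤ tauOf τdot y - tauOf τdot x := by
  rw [tauOf_sub hloc]
  simpa [mul_comm] using intervalIntegral.integral_mono_ae hxy intervalIntegrable_const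
    (hloc.integrableOn_isCompact isCompact_uIcc).intervalIntegrable hc

end Primitive

lemma Function.Periodic.exists_norm_le_of_boundedVariationOn {g : ℝ → ℝ} {T : ℝ}
    (hper : Function.Periodic g T) (hT : 0 < T) (hbv : BoundedVariationOn g (Icc 0 T)) :
    ∃ K : ℝ≥0, ∀ x, ‖g x‖ ≤ K := by
  refine ⟨‖g 0‖₊ + (eVariationOn g (Icc 0 T)).toNNReal, fun x => ?_⟩
  obtain ⟨y, hy, hxy⟩ := hper.exists_mem_Ico₀ hT x
  have hdist := hbv.dist_le (Ico_subset_Icc_self hy) (left_mem_Icc.2 hT.le)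
  rw [hxy]
  push_cast
  linarith [norm_le_norm_add_norm_sub' (g y) (g 0), dist_eq_norm (g y) (g 0)]

lemma exists_pos_ae_le_of_essInf_pos {α : Type*} [MeasurableSpace α] {μ : Measure α}
    {g : α → ℝ} (h : 0 < essInf g μ) : ∃ c, 0 < c ∧ ∀ᵐ x ∂μ, c ≤ g x := by
  have hsSup : essInf g μ = sSup {a | ∀ᵐ x ∂μ, a ≤ g x} := Filter.liminf_eq
  rw [hsSup] at h
  have hne : {a | ∀ᵐ x ∂μ, a ≤ g x}.Nonempty := by
    by_contra hemp
    rw [not_nonempty_iff_eq_empty.1 hemp, Real.sSup_empty] at h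
    exact h.false
  obtain ⟨c, hc, hc0⟩ := exists_lt_of_lt_csSup hne h
  exact ⟨c, hc0, hc⟩

theorem stmt8_general (p : ℕ) (hp : 2 ≤ p) (τdot : ℝ → ℝ) (hmeas : Measurable τdot)
    (hper : ∀ x, τdot (x + p) = τdot x)
    (hbv : BoundedVariationOn τdot (Icc 0 (p : ℝ)))
    (hinf : 0 < essInf τdot volume) :
    ∃ C₀ : ℝ, 0 < C₀ ∧ ∀ δ ∈ Ioo (0:ℝ) 1, ∀ x ∈ Icc (0:ℝ) 1,
      |Function.invFun (tauDelta τdot δ) x - Function.invFun (tauOf τdot) x| ≤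
        C₀ * δ := by
  have hp0 : (0 : ℝ) < p := by exact_mod_cast (by omega : 0 < p)
  obtain ⟨K, hK⟩ := Function.Periodic.exists_norm_le_of_boundedVariationOn hper hp0 hbv
  obtain ⟨c, hc0, hc⟩ := exists_pos_ae_le_of_essInf_pos hinf
  obtain ⟨u, hcu⟩ := hc.exists
  have hK0 : 0 < (K : ℝ) := hc0.trans_le (hcu.trans ((le_abs_self _).trans (hK u)))
  have hloc : LocallyIntegrable τdot :=
    (locallyIntegrable_const (K : ℝ)).mono hmeas.aestronglyMeasurable
      (ae_of_all _ fun u => (hK u).trans (le_abs_self _))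
  refine ⟨2 * K / c, by positivity, fun δ hδ x _ => ?_⟩
  set P := gaussianReal 0 (δ ^ 2).toNNReal
  have hmoment : ∫ z, |z| ∂P ≤ δ := by
    have h := integral_abs_sub_gaussianReal_le 0 (δ ^ 2).toNNReal
    simp_rw [sub_zero] at h
    rwa [Real.coe_toNNReal _ (sq_nonneg δ), Real.sqrt_sq hδ.1.le] at h
  have hτδ : tauDelta τdot δ = fun y => ∫ z, tauOf τdot (y + z) ∂P - ∫ z, tauOf τdot z ∂P := by
    ext y
    simp [tauDelta, convGauss_eq_integral_gaussianReal hδ.1, P]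
  rw [hτδ]
  calc _ ≤ 2 * K * (∫ z, |z| ∂P) / c :=
        abs_invFun_translationAverage_sub_invFun_le hc0 (lipschitzWith_tauOf hloc (ae_of_all _ hK))
          (fun x y => tauOf_expanding hloc hc) intervalIntegral.integral_same
          ((memLp_id_gaussianReal 1).integrable le_rfl) x
    _ ≤ 2 * K * δ / c := by gcongr
    _ = 2 * K / c * δ := by ring

/-- There is `C₀ > 0` depending only on `τ̇` such that for every `δ ∈ (0,1)`,
`sup_{x ∈ [0,1]} |τ_δ⁻¹(x) − τ⁻¹(x)| ≤ C₀ δ` (both `τ` and `τ_δ` are strictly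
increasing bijections of `ℝ`, and the inverses are realized by `Function.invFun`). -/
theorem stmt8 (p : ℕ) (hp : 2 ≤ p) (τdot : ℝ → ℝ) (hmeas : Measurable τdot)
    (hper : ∀ x, τdot (x + p) = τdot x)
    (hbv : BoundedVariationOn τdot (Icc 0 (p : ℝ)))
    (hinf : 0 < essInf τdot volume) (hsup : essSup τdot volume ≤ 1) :
    ∃ C₀ : ℝ, 0 < C₀ ∧ ∀ δ ∈ Ioo (0:ℝ) 1, ∀ x ∈ Icc (0:ℝ) 1,
      |Function.invFun (tauDelta τdot δ) x - Function.invFun (tauOf τdot) x| ≤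
        C₀ * δ :=
  stmt8_general p hp τdot hmeas hper hbv hinf
end

section
/- Let ρ > 0 and let f : {z ∈ ℂ : |Im z| ≤ ρ} → ℂ be continuous, holomorphic on {z : |Im z| < ρ}, and 1-periodic (f(z+1) = f(z) for all z). Then sup_{x ∈ [0,1]} |f(x)| + ∫₀¹ |f'(x)| dx ≤ (1 + 1/ρ)·sup_{|Im z| ≤ ρ} |f(z)|. -/
/-!
Periodicity moves every point of the closed strip into the compact rectangle
`[0, 1] ×ℂ [-ρ, ρ]`, so `f` is bounded there and `M = sup_{|Im z| ≤ ρ} |f z|` is a genuine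
supremum. The first term is then at most `M`, and Cauchy's estimate on the disc of radius `ρ`
around a real point, which stays inside the strip, gives `|f' x| ≤ M / ρ` pointwise.
-/

open Set Metric

lemma Complex.abs_im_le_dist_ofReal (z : ℂ) (x : ℝ) : |z.im| ≤ dist z x := by
  simpa [Complex.dist_eq] using Complex.abs_im_le_norm (z - x)

section Strip

variable {E : Type*} {ρ : ℝ} {f : ℂ → E}

lemma periodic_comp_add_ofReal_of_strip (hper : ∀ z : ℂ, |z.im| ≤ ρ → f (z + 1) = f z)
    {w : ℂ} (hw : |w.im| ≤ ρ) : Function.Periodic (fun t : ℝ => f (w + t)) 1 := fun t => by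
  simpa [add_assoc] using hper (w + t) (by simpa using hw)

lemma exists_mem_reProdIm_eq_of_periodic_on_strip
    (hper : ∀ z : ℂ, |z.im| ≤ ρ → f (z + 1) = f z) {z : ℂ} (hz : |z.im| ≤ ρ) :
    ∃ w ∈ Icc 0 1 ×ℂ Icc (-ρ) ρ, f z = f w := by
  have hw : |(z.im * Complex.I).im| ≤ ρ := by simpa using hz
  obtain ⟨t, ht, hft⟩ :=
    (periodic_comp_add_ofReal_of_strip hper hw).exists_mem_Ico₀ one_pos z.re
  refine ⟨z.im * Complex.I + t,
    ⟨by simpa using Ico_subset_Icc_self ht, by simpa using abs_le.1 hz⟩, ?_⟩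
  conv_lhs => rw [← Complex.re_add_im z, add_comm]
  exact hft

lemma bddAbove_norm_image_strip_of_periodic [NormedAddCommGroup E]
    (hcont : ContinuousOn f {z : ℂ | |z.im| ≤ ρ})
    (hper : ∀ z : ℂ, |z.im| ≤ ρ → f (z + 1) = f z) :
    BddAbove ((fun z => ‖f z‖) '' {z : ℂ | |z.im| ≤ ρ}) := by
  have hK : IsCompact (Icc 0 1 ×ℂ Icc (-ρ) ρ) := isCompact_Icc.reProdIm isCompact_Icc
  obtain ⟨C, hC⟩ := hK.exists_bound_of_continuousOn (hcont.mono fun z hz => abs_le.2 hz.2)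
  refine ⟨C, forall_mem_image.2 fun z hz => ?_⟩
  obtain ⟨w, hw, hfw⟩ := exists_mem_reProdIm_eq_of_periodic_on_strip hper hz
  exact hfw ▸ hC w hw

lemma norm_deriv_ofReal_le_of_strip [NormedAddCommGroup E] [NormedSpace ℂ E] {M : ℝ}
    (hρ : 0 < ρ)
    (hcont : ContinuousOn f {z : ℂ | |z.im| ≤ ρ})
    (hdiff : DifferentiableOn ℂ f {z : ℂ | |z.im| < ρ})
    (hM : ∀ z : ℂ, |z.im| ≤ ρ → ‖f z‖ ≤ M) (x : ℝ) : ‖deriv f x‖ ≤ M / ρ := by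
  have hball : DiffContOnCl ℂ f (ball (x : ℂ) ρ) := by
    refine ⟨hdiff.mono fun z hz => ?_, ?_⟩
    · exact (Complex.abs_im_le_dist_ofReal z x).trans_lt hz
    · rw [closure_ball _ hρ.ne']
      exact hcont.mono fun z hz => (Complex.abs_im_le_dist_ofReal z x).trans hz
  refine Complex.norm_deriv_le_of_forall_mem_sphere_norm_le hρ hball fun z hz => hM z ?_
  exact (Complex.abs_im_le_dist_ofReal z x).trans_eq hz

end Strip

/-- Cauchy-type estimate: if `f` is continuous on the closed strip
`{|Im z| ≤ ρ}`, holomorphic on the open strip and `1`-periodic there, then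
`sup_{x ∈ [0,1]} |f(x)| + ∫₀¹ |f'(x)| dx ≤ (1 + 1/ρ)·sup_{|Im z| ≤ ρ} |f(z)|`. -/
theorem stmt17 (ρ : ℝ) (hρ : 0 < ρ) (f : ℂ → ℂ)
    (hcont : ContinuousOn f {z : ℂ | |z.im| ≤ ρ})
    (hdiff : DifferentiableOn ℂ f {z : ℂ | |z.im| < ρ})
    (hper : ∀ z : ℂ, |z.im| ≤ ρ → f (z + 1) = f z) :
    sSup ((fun x : ℝ => ‖f x‖) '' Icc 0 1) +
        (∫ x in (0:ℝ)..1, ‖deriv f x‖) ≤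
      (1 + 1 / ρ) * sSup ((fun z => ‖f z‖) '' {z : ℂ | |z.im| ≤ ρ}) := by
  set M := sSup ((fun z => ‖f z‖) '' {z : ℂ | |z.im| ≤ ρ})
  have hM : ∀ z : ℂ, |z.im| ≤ ρ → ‖f z‖ ≤ M := fun z hz =>
    le_csSup (bddAbove_norm_image_strip_of_periodic hcont hper) (mem_image_of_mem _ hz)
  have hsup : sSup ((fun x : ℝ => ‖f x‖) '' Icc 0 1) ≤ M :=
    csSup_le ((nonempty_Icc.2 zero_le_one).image _)
      (forall_mem_image.2 fun x _ => hM x (by simpa using hρ.le))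
  have hint : (∫ x in (0:ℝ)..1, ‖deriv f x‖) ≤ M / ρ := by
    have hnorm := intervalIntegral.norm_integral_le_of_norm_le_const (a := 0) (b := 1)
      fun x _ => (norm_norm (deriv f x)).trans_le
        (norm_deriv_ofReal_le_of_strip hρ hcont hdiff hM x)
    simpa using (le_abs_self _).trans hnorm
  calc _ ≤ M + M / ρ := add_le_add hsup hint
    _ = _ := by ring
end

section
/- The map P^E defined by P^E f(z) := τ'(z)·f(τ(z)) + τ'(z+1)·f(τ(z+1)) sends E_ρ into itself and is a compact bounded linear operator on E_ρ. -/
open Set Filter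

/-- The closed strip `{z : |Im z| ≤ ρ}`. -/
def closedStrip (ρ : ℝ) : Set ℂ := {z : ℂ | |z.im| ≤ ρ}

/-- The open strip `{z : |Im z| < ρ}`. -/
def openStrip (ρ : ℝ) : Set ℂ := {z : ℂ | |z.im| < ρ}

/-- Membership in the Banach space `E_ρ`: continuous on the closed strip,
holomorphic on the open strip, and `1`-periodic. -/
def MemE (ρ : ℝ) (f : ℂ → ℂ) : Prop :=
  ContinuousOn f (closedStrip ρ) ∧ DifferentiableOn ℂ f (openStrip ρ) ∧
    ∀ z ∈ closedStrip ρ, f (z + 1) = f z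

/-- The norm of `E_ρ`: the supremum of `|f|` over the closed strip. -/
noncomputable def supStrip (ρ : ℝ) (f : ℂ → ℂ) : ℝ :=
  sSup ((fun z => ‖f z‖) '' closedStrip ρ)

/-- The operator `P^E f(z) = τ'(z)·f(τ(z)) + τ'(z+1)·f(τ(z+1))`. -/
noncomputable def PE (τ f : ℂ → ℂ) : ℂ → ℂ := fun z =>
  deriv τ z * f (τ z) + deriv τ (z + 1) * f (τ (z + 1))

/-!
Since `τ` is real on `ℝ` and `|τ'| ≤ θ`, it maps the strip of width `ρ` into the strip of
width `θρ < ρ`; this gives `P^E(E_ρ) ⊆ E_ρ` and `‖P^E f‖ ≤ 2θ‖f‖`. For compactness, the Cauchy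
estimates make every `f` in the unit ball of `E_ρ` uniformly Lipschitz on a strip strictly between
widths `θρ` and `ρ`, so the functions `P^E f` are uniformly bounded and uniformly Lipschitz on the
closed strip. By periodicity, Arzelà–Ascoli on the compact cell `[0, 1] × [-ρ, ρ]` yields a
uniformly convergent subsequence, and `E_ρ` is closed under uniform limits.
-/

open Metric
open scoped NNReal Topology

lemma isOpen_openStrip (ρ : ℝ) : IsOpen (openStrip ρ) :=
  isOpen_lt (continuous_abs.comp Complex.continuous_im) continuous_const

lemma convex_openStrip (ρ : ℝ) : Convex ℝ (openStrip ρ) := by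
  have : openStrip ρ = Complex.im ⁻¹' Ioo (-ρ) ρ := by
    ext z; simp [openStrip, abs_lt]
  rw [this]
  exact (convex_Ioo _ _).linear_preimage Complex.imLm

lemma openStrip_mono {a b : ℝ} (h : a ≤ b) : openStrip a ⊆ openStrip b :=
  fun _ hz => lt_of_lt_of_le hz h

lemma closedStrip_subset_openStrip {a b : ℝ} (h : a < b) : closedStrip a ⊆ openStrip b :=
  fun _ hz => lt_of_le_of_lt hz h

lemma openStrip_subset_closedStrip (a : ℝ) : openStrip a ⊆ closedStrip a :=
  fun _ hz => le_of_lt (show _ < a from hz)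

lemma add_one_mem_closedStrip {ρ : ℝ} {z : ℂ} (hz : z ∈ closedStrip ρ) :
    z + 1 ∈ closedStrip ρ := by
  simpa [closedStrip] using hz

lemma add_one_mem_openStrip {ρ : ℝ} {z : ℂ} (hz : z ∈ openStrip ρ) : z + 1 ∈ openStrip ρ := by
  simpa [openStrip] using hz

lemma closedBall_subset_openStrip {a b r : ℝ} {c : ℂ} (hc : c ∈ openStrip a) (h : a + r < b) :
    closedBall c r ⊆ openStrip b := by
  intro z hz
  have hzc : |z.im - c.im| ≤ r := by
    rw [← Complex.sub_im]
    exact (Complex.abs_im_le_norm _).trans (by rwa [← dist_eq_norm])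
  have hc' : |c.im| < a := hc
  show |z.im| < b
  linarith [abs_sub_abs_le_abs_sub z.im c.im]

lemma norm_sub_le_of_norm_deriv_le_openStrip {b C : ℝ} {g : ℂ → ℂ}
    (hg : DifferentiableOn ℂ g (openStrip b)) (hC : ∀ z ∈ openStrip b, ‖deriv g z‖ ≤ C)
    {x y : ℂ} (hx : x ∈ openStrip b) (hy : y ∈ openStrip b) :
    ‖g y - g x‖ ≤ C * ‖y - x‖ :=
  (convex_openStrip b).norm_image_sub_le_of_norm_deriv_le
    (fun _ hz => hg.differentiableAt ((isOpen_openStrip b).mem_nhds hz)) hC hx hy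

lemma norm_deriv_le_of_norm_le_openStrip {a b r M : ℝ} {g : ℂ → ℂ} (hr : 0 < r) (hab : a + r < b)
    (hg : DifferentiableOn ℂ g (openStrip b)) (hM : ∀ z ∈ openStrip b, ‖g z‖ ≤ M)
    {c : ℂ} (hc : c ∈ openStrip a) : ‖deriv g c‖ ≤ M / r := by
  have hball := closedBall_subset_openStrip hc hab
  exact Complex.norm_deriv_le_of_forall_mem_sphere_norm_le hr (hg.diffContOnCl_ball hball)
    fun z hz => hM z (hball (sphere_subset_closedBall hz))

lemma norm_sub_le_of_norm_le_openStrip {a b r M : ℝ} {g : ℂ → ℂ} (hr : 0 < r) (hab : a + r < b)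
    (hg : DifferentiableOn ℂ g (openStrip b)) (hM : ∀ z ∈ openStrip b, ‖g z‖ ≤ M)
    {x y : ℂ} (hx : x ∈ openStrip a) (hy : y ∈ openStrip a) :
    ‖g y - g x‖ ≤ M / r * ‖y - x‖ :=
  norm_sub_le_of_norm_deriv_le_openStrip (hg.mono (openStrip_mono (by linarith [hr])))
    (fun _ hc => norm_deriv_le_of_norm_le_openStrip hr hab hg hM hc) hx hy

lemma abs_im_apply_le_mul_abs_im {ρ' θ : ℝ} {τ : ℂ → ℂ}
    (hτdiff : DifferentiableOn ℂ τ (openStrip ρ')) (hτreal : ∀ x : ℝ, (τ x).im = 0)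
    (hτderiv : ∀ z ∈ openStrip ρ', ‖deriv τ z‖ ≤ θ) {z : ℂ} (hz : z ∈ openStrip ρ') :
    |(τ z).im| ≤ θ * |z.im| := by
  have hre : (z.re : ℂ) ∈ openStrip ρ' := by
    have : |z.im| < ρ' := hz
    show |(z.re : ℂ).im| < ρ'
    simpa using (abs_nonneg _).trans_lt this
  have hdist : ‖z - z.re‖ = |z.im| := by
    rw [← dist_eq_norm, Complex.dist_of_re_eq (by simp)]
    simp
  calc |(τ z).im| = |(τ z - τ z.re).im| := by rw [Complex.sub_im, hτreal, sub_zero]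
    _ ≤ ‖τ z - τ z.re‖ := Complex.abs_im_le_norm _
    _ ≤ θ * |z.im| := hdist ▸ norm_sub_le_of_norm_deriv_le_openStrip hτdiff hτderiv hre hz

lemma mapsTo_closedStrip_openStrip {ρ ρ' ρ₂ θ : ℝ} {τ : ℂ → ℂ} (hρ' : ρ < ρ') (hθ : 0 ≤ θ)
    (hρ₂ : θ * ρ < ρ₂) (hτdiff : DifferentiableOn ℂ τ (openStrip ρ'))
    (hτreal : ∀ x : ℝ, (τ x).im = 0) (hτderiv : ∀ z ∈ openStrip ρ', ‖deriv τ z‖ ≤ θ) :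
    MapsTo τ (closedStrip ρ) (openStrip ρ₂) := fun z hz =>
  calc |(τ z).im| ≤ θ * |z.im| :=
        abs_im_apply_le_mul_abs_im hτdiff hτreal hτderiv (closedStrip_subset_openStrip hρ' hz)
    _ ≤ θ * ρ := mul_le_mul_of_nonneg_left hz hθ
    _ < ρ₂ := hρ₂

lemma deriv_add_two {ρ' : ℝ} {τ : ℂ → ℂ} (hτper : ∀ z ∈ openStrip ρ', τ (z + 2) = τ z + 1)
    {z : ℂ} (hz : z ∈ openStrip ρ') : deriv τ (z + 2) = deriv τ z := by
  have hev : (fun w => τ (w + 2)) =ᶠ[𝓝 z] fun w => τ w + 1 :=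
    eventually_of_mem ((isOpen_openStrip ρ').mem_nhds hz) hτper
  rw [← deriv_comp_add_const, hev.deriv_eq, deriv_add_const]

def periodCell (ρ : ℝ) : Set ℂ := Icc 0 1 ×ℂ Icc (-ρ) ρ

lemma isCompact_periodCell (ρ : ℝ) : IsCompact (periodCell ρ) :=
  isCompact_Icc.reProdIm isCompact_Icc

lemma periodCell_subset_closedStrip (ρ : ℝ) : periodCell ρ ⊆ closedStrip ρ :=
  fun _ hz => abs_le.2 hz.2

lemma sub_floor_re_mem_periodCell {ρ : ℝ} {z : ℂ} (hz : z ∈ closedStrip ρ) :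
    z - ⌊z.re⌋ ∈ periodCell ρ := by
  refine ⟨⟨?_, ?_⟩, ?_⟩
  · simp
  · simpa using (Int.fract_lt_one z.re).le
  · simpa using abs_le.1 hz

lemma apply_add_intCast {ρ : ℝ} {f : ℂ → ℂ} (hper : ∀ z ∈ closedStrip ρ, f (z + 1) = f z)
    (m : ℤ) {z : ℂ} (hz : z ∈ closedStrip ρ) : f (z + m) = f z := by
  have hmem : ∀ k : ℤ, z + k ∈ closedStrip ρ := fun k => by simpa [closedStrip] using hz
  induction m using Int.induction_on with
  | zero => simp
  | succ k ih => rw [← ih, ← hper _ (hmem k)]; push_cast; ring_nf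
  | pred k ih =>
    rw [← ih, ← hper _ (hmem (-k - 1))]; push_cast; ring_nf

lemma apply_sub_floor_re {ρ : ℝ} {f : ℂ → ℂ} (hper : ∀ z ∈ closedStrip ρ, f (z + 1) = f z)
    {z : ℂ} (hz : z ∈ closedStrip ρ) : f (z - ⌊z.re⌋) = f z := by
  simpa using (apply_add_intCast hper ⌊z.re⌋
    (periodCell_subset_closedStrip ρ (sub_floor_re_mem_periodCell hz))).symm

lemma norm_le_supStrip {ρ : ℝ} {f : ℂ → ℂ} (hf : MemE ρ f) {z : ℂ} (hz : z ∈ closedStrip ρ) :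
    ‖f z‖ ≤ supStrip ρ f := by
  obtain ⟨C, hC⟩ := (isCompact_periodCell ρ).exists_bound_of_continuousOn
    (hf.1.mono (periodCell_subset_closedStrip ρ))
  refine le_csSup ⟨C, ?_⟩ ⟨z, hz, rfl⟩
  rintro _ ⟨w, hw, rfl⟩
  show ‖f w‖ ≤ C
  rw [← apply_sub_floor_re hf.2.2 hw]
  exact hC _ (sub_floor_re_mem_periodCell hw)

lemma supStrip_le {ρ M : ℝ} {f : ℂ → ℂ} (hM : 0 ≤ M) (hf : ∀ z ∈ closedStrip ρ, ‖f z‖ ≤ M) :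
    supStrip ρ f ≤ M :=
  Real.sSup_le (by rintro _ ⟨z, hz, rfl⟩; exact hf z hz) hM

lemma supStrip_nonneg (ρ : ℝ) (f : ℂ → ℂ) : 0 ≤ supStrip ρ f :=
  Real.sSup_nonneg (by rintro _ ⟨z, -, rfl⟩; exact norm_nonneg _)

lemma memE_of_tendstoUniformlyOn {ρ : ℝ} {F : ℕ → ℂ → ℂ} {g : ℂ → ℂ} (hF : ∀ n, MemE ρ (F n))
    (hFg : TendstoUniformlyOn F g atTop (closedStrip ρ)) : MemE ρ g := by
  refine ⟨hFg.continuousOn (Eventually.of_forall fun n => (hF n).1).frequently,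
    (hFg.tendstoLocallyUniformlyOn.mono (openStrip_subset_closedStrip ρ)).differentiableOn
      (Eventually.of_forall fun n => (hF n).2.1) (isOpen_openStrip ρ), fun z hz => ?_⟩
  refine tendsto_nhds_unique ?_ (hFg.tendsto_at hz)
  exact (hFg.tendsto_at (add_one_mem_closedStrip hz)).congr fun n => (hF n).2.2 z hz

theorem exists_subseq_tendstoUniformlyOn_of_lipschitzOnWith {X E : Type*} [PseudoMetricSpace X]
    [NormedAddCommGroup E] [ProperSpace E] {K : Set X} (hK : IsCompact K) {h : ℕ → X → E}
    {B : ℝ} {L : ℝ≥0} (hbd : ∀ n, ∀ x ∈ K, ‖h n x‖ ≤ B) (hlip : ∀ n, LipschitzOnWith L (h n) K) :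
    ∃ σ : ℕ → ℕ, StrictMono σ ∧ ∃ g : X → E, TendstoUniformlyOn (fun n => h (σ n)) g atTop K := by
  classical
  have : CompactSpace K := isCompact_iff_compactSpace.mp hK
  let F : ℕ → BoundedContinuousFunction K E := fun n =>
    .mkOfCompact ⟨K.domRestrict (h n), (hlip n).continuousOn.domRestrict⟩
  have hequi : Equicontinuous ((↑) : range F → K → E) := by
    refine equicontinuous_of_continuity_modulus (fun t => L * t) ?_ _ ?_
    · simpa using (tendsto_id.const_mul (L : ℝ) : Tendsto (fun t : ℝ => L * t) (𝓝 0) _)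
    · rintro x y ⟨_, n, rfl⟩
      exact (hlip n).dist_le_mul x x.2 y y.2
  have hcomp := BoundedContinuousFunction.arzela_ascoli (closedBall 0 B) (isCompact_closedBall 0 B)
    (range F) (fun _ x ⟨n, hn⟩ => by
      rw [← hn, mem_closedBall, dist_zero_right]; exact hbd n x x.2) hequi
  obtain ⟨G, -, σ, hσ, hFG⟩ := hcomp.tendsto_subseq fun n => subset_closure (mem_range_self n)
  refine ⟨σ, hσ, fun x => if hx : x ∈ K then G ⟨x, hx⟩ else 0, ?_⟩
  rw [tendstoUniformlyOn_iff_tendstoUniformly_comp_coe]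
  simp only [Function.comp_def, Subtype.coe_prop, dite_true]
  exact BoundedContinuousFunction.tendsto_iff_tendstoUniformly.mp hFG

lemma exists_subseq_tendstoUniformlyOn_closedStrip {ρ B : ℝ} {L : ℝ≥0} {h : ℕ → ℂ → ℂ}
    (hper : ∀ n, ∀ z ∈ closedStrip ρ, h n (z + 1) = h n z)
    (hbd : ∀ n, ∀ z ∈ closedStrip ρ, ‖h n z‖ ≤ B)
    (hlip : ∀ n, LipschitzOnWith L (h n) (closedStrip ρ)) :
    ∃ σ : ℕ → ℕ, StrictMono σ ∧ ∃ g : ℂ → ℂ,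
      TendstoUniformlyOn (fun n => h (σ n)) g atTop (closedStrip ρ) := by
  obtain ⟨σ, hσ, G, hG⟩ := exists_subseq_tendstoUniformlyOn_of_lipschitzOnWith
    (isCompact_periodCell ρ) (fun n z hz => hbd n z (periodCell_subset_closedStrip ρ hz))
    (fun n => (hlip n).mono (periodCell_subset_closedStrip ρ))
  refine ⟨σ, hσ, G ∘ fun z => z - ⌊z.re⌋, ?_⟩
  refine ((hG.comp _).mono fun z hz => sub_floor_re_mem_periodCell hz).congr ?_
  exact Eventually.of_forall fun n z hz => apply_sub_floor_re (hper (σ n)) hz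

lemma memE_PE {ρ ρ' : ℝ} {τ f : ℂ → ℂ} (hρ' : ρ < ρ')
    (hτdiff : DifferentiableOn ℂ τ (openStrip ρ'))
    (hτper : ∀ z ∈ openStrip ρ', τ (z + 2) = τ z + 1)
    (hmaps : MapsTo τ (closedStrip ρ) (openStrip ρ)) (hf : MemE ρ f) : MemE ρ (PE τ f) := by
  have hτ' : DifferentiableOn ℂ (deriv τ) (openStrip ρ') :=
    (hτdiff.analyticOnNhd (isOpen_openStrip ρ')).deriv.differentiableOn
  have hCO := closedStrip_subset_openStrip hρ'
  have hOO := openStrip_mono hρ'.le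
  have hmapsC := hmaps.mono_right (openStrip_subset_closedStrip ρ)
  have hcont : ContinuousOn (fun z => deriv τ z * f (τ z)) (closedStrip ρ) :=
    (hτ'.continuousOn.mono hCO).mul (hf.1.comp (hτdiff.continuousOn.mono hCO) hmapsC)
  have hdiff : DifferentiableOn ℂ (fun z => deriv τ z * f (τ z)) (openStrip ρ) :=
    (hτ'.mono hOO).mul (hf.2.1.comp (hτdiff.mono hOO)
      fun z hz => hmaps (openStrip_subset_closedStrip ρ hz))
  refine ⟨hcont.add (hcont.comp (continuous_add_const 1).continuousOn
      fun _ => add_one_mem_closedStrip),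
    hdiff.add (hdiff.comp (differentiable_id.add_const 1).differentiableOn
      fun _ => add_one_mem_openStrip), fun z hz => ?_⟩
  have hz' := hCO hz
  simp only [PE]
  rw [add_assoc, one_add_one_eq_two, deriv_add_two hτper hz', hτper z hz', hf.2.2 _ (hmapsC hz)]
  ring

lemma norm_PE_le {ρ θ M : ℝ} {τ f : ℂ → ℂ} (hτderiv : ∀ z ∈ closedStrip ρ, ‖deriv τ z‖ ≤ θ)
    (hmaps : MapsTo τ (closedStrip ρ) (closedStrip ρ)) (hf : ∀ z ∈ closedStrip ρ, ‖f z‖ ≤ M)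
    {z : ℂ} (hz : z ∈ closedStrip ρ) : ‖PE τ f z‖ ≤ 2 * θ * M := by
  have hterm : ∀ w ∈ closedStrip ρ, ‖deriv τ w * f (τ w)‖ ≤ θ * M := fun w hw => by
    rw [norm_mul]
    exact mul_le_mul (hτderiv w hw) (hf _ (hmaps hw)) (norm_nonneg _)
      ((norm_nonneg _).trans (hτderiv w hw))
  calc ‖PE τ f z‖ ≤ θ * M + θ * M :=
        (norm_add_le _ _).trans (add_le_add (hterm z hz) (hterm _ (add_one_mem_closedStrip hz)))
    _ = 2 * θ * M := by ring

lemma norm_mul_sub_mul_le {R : Type*} [SeminormedRing R] (a b c d : R) :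
    ‖a * b - c * d‖ ≤ ‖a‖ * ‖b - d‖ + ‖a - c‖ * ‖d‖ := by
  calc ‖a * b - c * d‖ = ‖a * (b - d) + (a - c) * d‖ := by congr 1; noncomm_ring
    _ ≤ ‖a‖ * ‖b - d‖ + ‖a - c‖ * ‖d‖ :=
      (norm_add_le _ _).trans (add_le_add (norm_mul_le _ _) (norm_mul_le _ _))

lemma norm_PE_sub_le {ρ θ K Lτ Lτ' : ℝ} {s : Set ℂ} {τ u : ℂ → ℂ} (hK : 0 ≤ K)
    (hτderiv : ∀ z ∈ closedStrip ρ, ‖deriv τ z‖ ≤ θ)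
    (hτlip : ∀ z ∈ closedStrip ρ, ∀ w ∈ closedStrip ρ, ‖τ z - τ w‖ ≤ Lτ * ‖z - w‖)
    (hτ'lip : ∀ z ∈ closedStrip ρ, ∀ w ∈ closedStrip ρ,
      ‖deriv τ z - deriv τ w‖ ≤ Lτ' * ‖z - w‖)
    (hmaps : MapsTo τ (closedStrip ρ) s) (hu : ∀ x ∈ s, ‖u x‖ ≤ 1)
    (hulip : ∀ x ∈ s, ∀ y ∈ s, ‖u x - u y‖ ≤ K * ‖x - y‖)
    {z w : ℂ} (hz : z ∈ closedStrip ρ) (hw : w ∈ closedStrip ρ) :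
    ‖PE τ u z - PE τ u w‖ ≤ 2 * (θ * (K * Lτ) + Lτ') * ‖z - w‖ := by
  have hterm : ∀ z ∈ closedStrip ρ, ∀ w ∈ closedStrip ρ,
      ‖deriv τ z * u (τ z) - deriv τ w * u (τ w)‖ ≤ (θ * (K * Lτ) + Lτ') * ‖z - w‖ := by
    intro z hz w hw
    have hθ : 0 ≤ θ := (norm_nonneg _).trans (hτderiv z hz)
    calc _ ≤ ‖deriv τ z‖ * ‖u (τ z) - u (τ w)‖ + ‖deriv τ z - deriv τ w‖ * ‖u (τ w)‖ :=
          norm_mul_sub_mul_le _ _ _ _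
      _ ≤ θ * (K * (Lτ * ‖z - w‖)) + Lτ' * ‖z - w‖ * 1 := by
          have hτ'zw := hτ'lip z hz w hw
          refine add_le_add (mul_le_mul (hτderiv z hz) ?_ (norm_nonneg _) hθ)
            (mul_le_mul hτ'zw (hu _ (hmaps hw)) (norm_nonneg _) ((norm_nonneg _).trans hτ'zw))
          exact (hulip _ (hmaps hz) _ (hmaps hw)).trans
            (mul_le_mul_of_nonneg_left (hτlip z hz w hw) hK)
      _ = (θ * (K * Lτ) + Lτ') * ‖z - w‖ := by ring
  have hshift := hterm _ (add_one_mem_closedStrip hz) _ (add_one_mem_closedStrip hw)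
  rw [add_sub_add_right_eq_sub] at hshift
  calc ‖PE τ u z - PE τ u w‖
      = ‖(deriv τ z * u (τ z) - deriv τ w * u (τ w)) +
          (deriv τ (z + 1) * u (τ (z + 1)) - deriv τ (w + 1) * u (τ (w + 1)))‖ := by
        simp only [PE]; ring_nf
    _ ≤ 2 * (θ * (K * Lτ) + Lτ') * ‖z - w‖ := by
        linarith [norm_add_le (deriv τ z * u (τ z) - deriv τ w * u (τ w))
          (deriv τ (z + 1) * u (τ (z + 1)) - deriv τ (w + 1) * u (τ (w + 1))), hterm z hz w hw]

lemma exists_lipschitzOnWith_PE {ρ ρ' θ : ℝ} {τ : ℂ → ℂ} (hρ : 0 < ρ) (hρ' : ρ < ρ')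
    (hθ : 0 ≤ θ) (hθ1 : θ < 1) (hτdiff : DifferentiableOn ℂ τ (openStrip ρ'))
    (hτreal : ∀ x : ℝ, (τ x).im = 0) (hτderiv : ∀ z ∈ openStrip ρ', ‖deriv τ z‖ ≤ θ) :
    ∃ L : ℝ≥0, ∀ u : ℂ → ℂ, DifferentiableOn ℂ u (openStrip ρ) →
      (∀ z ∈ closedStrip ρ, ‖u z‖ ≤ 1) → LipschitzOnWith L (PE τ u) (closedStrip ρ) := by
  have hCO := closedStrip_subset_openStrip hρ'
  set r := (1 - θ) * ρ / 4 with hr_def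
  set r' := (ρ' - ρ) / 4 with hr'_def
  have hr : 0 < r := by rw [hr_def]; nlinarith
  have hr' : 0 < r' := by rw [hr'_def]; linarith
  have hmaps : MapsTo τ (closedStrip ρ) (openStrip ((1 + θ) * ρ / 2)) :=
    mapsTo_closedStrip_openStrip hρ' hθ (by nlinarith) hτdiff hτreal hτderiv
  have hτ' : DifferentiableOn ℂ (deriv τ) (openStrip ρ') :=
    (hτdiff.analyticOnNhd (isOpen_openStrip ρ')).deriv.differentiableOn
  refine ⟨(2 * (θ * (1 / r * θ) + θ / r')).toNNReal, fun u hu hu1 =>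
    LipschitzOnWith.of_dist_le' fun z hz w hw => ?_⟩
  simp only [dist_eq_norm]
  refine norm_PE_sub_le (by positivity) (fun z hz => hτderiv z (hCO hz))
    (fun z hz w hw => norm_sub_le_of_norm_deriv_le_openStrip hτdiff hτderiv (hCO hw) (hCO hz))
    (fun z hz w hw => norm_sub_le_of_norm_le_openStrip (a := (ρ + ρ') / 2) hr' (by linarith) hτ'
      hτderiv (closedStrip_subset_openStrip (by linarith) hw)
      (closedStrip_subset_openStrip (by linarith) hz))
    hmaps (fun x hx => hu1 x (openStrip_subset_closedStrip _ (openStrip_mono (by nlinarith) hx)))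
    (fun x hx y hy => norm_sub_le_of_norm_le_openStrip hr (by nlinarith) hu
      (fun z hz => hu1 z (openStrip_subset_closedStrip ρ hz)) hy hx) hz hw

theorem stmt18_general (ρ ρ' θ : ℝ) (hρ : 0 < ρ) (hρ' : ρ < ρ') (hθ1 : θ < 1)
    (τ : ℂ → ℂ) (hτdiff : DifferentiableOn ℂ τ (openStrip ρ'))
    (hτper : ∀ z ∈ openStrip ρ', τ (z + 2) = τ z + 1)
    (hτreal : ∀ x : ℝ, (τ x).im = 0)
    (hτderiv : ∀ z ∈ openStrip ρ', ‖deriv τ z‖ ≤ θ) :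
    (∀ f, MemE ρ f → MemE ρ (PE τ f)) ∧
    (∀ (a : ℂ) (f g : ℂ → ℂ),
      PE τ (fun z => a * f z + g z) = fun z => a * PE τ f z + PE τ g z) ∧
    (∃ C : ℝ, ∀ f, MemE ρ f → supStrip ρ (PE τ f) ≤ C * supStrip ρ f) ∧
    (∀ f : ℕ → ℂ → ℂ, (∀ n, MemE ρ (f n)) → (∀ n, supStrip ρ (f n) ≤ 1) →
      ∃ (σ : ℕ → ℕ) (g : ℂ → ℂ), StrictMono σ ∧ MemE ρ g ∧
        TendstoUniformlyOn (fun n => PE τ (f (σ n))) g atTop (closedStrip ρ)) := by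
  have hθ : 0 ≤ θ := (norm_nonneg _).trans (hτderiv 0 (by simpa [openStrip] using hρ.trans hρ'))
  have hmaps : MapsTo τ (closedStrip ρ) (openStrip ρ) :=
    mapsTo_closedStrip_openStrip hρ' hθ (by nlinarith) hτdiff hτreal hτderiv
  have hmem : ∀ f, MemE ρ f → MemE ρ (PE τ f) := fun f => memE_PE hρ' hτdiff hτper hmaps
  have hbound : ∀ f M, (∀ z ∈ closedStrip ρ, ‖f z‖ ≤ M) →
      ∀ z ∈ closedStrip ρ, ‖PE τ f z‖ ≤ 2 * θ * M := fun f M hf z =>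
    norm_PE_le (fun w hw => hτderiv w (closedStrip_subset_openStrip hρ' hw))
      (hmaps.mono_right (openStrip_subset_closedStrip ρ)) hf
  refine ⟨hmem, fun a f g => funext fun z => by simp only [PE]; ring,
    ⟨2 * θ, fun f hf => ?_⟩, fun f hf hf1 => ?_⟩
  · exact supStrip_le (by have := supStrip_nonneg ρ f; positivity)
      (hbound f _ fun z hz => norm_le_supStrip hf hz)
  · have hf1' : ∀ n, ∀ z ∈ closedStrip ρ, ‖f n z‖ ≤ 1 :=
      fun n z hz => (norm_le_supStrip (hf n) hz).trans (hf1 n)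
    obtain ⟨L, hL⟩ := exists_lipschitzOnWith_PE hρ hρ' hθ hθ1 hτdiff hτreal hτderiv
    obtain ⟨σ, hσ, g, hg⟩ := exists_subseq_tendstoUniformlyOn_closedStrip
      (fun n => (hmem _ (hf n)).2.2) (fun n => hbound _ _ (hf1' n))
      (fun n => hL _ (hf n).2.1 (hf1' n))
    exact ⟨σ, g, hσ, memE_of_tendstoUniformlyOn (fun n => hmem _ (hf (σ n))) hg, hg⟩

/-- `P^E` maps `E_ρ` into itself and is a compact bounded linear operator on
`E_ρ`: it is linear, bounded in the sup-norm of the strip, and the image of any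
bounded sequence of `E_ρ` has a subsequence converging uniformly on the closed
strip to an element of `E_ρ`. -/
theorem stmt18 (ρ ρ' θ : ℝ) (hρ : 0 < ρ) (hρ' : ρ < ρ') (hθ0 : 0 < θ) (hθ1 : θ < 1)
    (τ : ℂ → ℂ) (hτdiff : DifferentiableOn ℂ τ (openStrip ρ'))
    (hτper : ∀ z ∈ openStrip ρ', τ (z + 2) = τ z + 1)
    (hτreal : ∀ x : ℝ, (τ x).im = 0)
    (hτderiv : ∀ z ∈ openStrip ρ', ‖deriv τ z‖ ≤ θ) :
    (∀ f, MemE ρ f → MemE ρ (PE τ f)) ∧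
    (∀ (a : ℂ) (f g : ℂ → ℂ),
      PE τ (fun z => a * f z + g z) = fun z => a * PE τ f z + PE τ g z) ∧
    (∃ C : ℝ, ∀ f, MemE ρ f → supStrip ρ (PE τ f) ≤ C * supStrip ρ f) ∧
    (∀ f : ℕ → ℂ → ℂ, (∀ n, MemE ρ (f n)) → (∀ n, supStrip ρ (f n) ≤ 1) →
      ∃ (σ : ℕ → ℕ) (g : ℂ → ℂ), StrictMono σ ∧ MemE ρ g ∧
        TendstoUniformlyOn (fun n => PE τ (f (σ n))) g atTop (closedStrip ρ)) :=
  stmt18_general ρ ρ' θ hρ hρ' hθ1 τ hτdiff hτper hτreal hτderiv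
end
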